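/- Let q > 0, k ∈ ℝ, and suppose u, k satisfy (1/2)ξω ≤ k ≤ u ≤ 12ξω for some ξ, ω > 0 (in particular u ≥ k > 0). Define g̃(u,k) = q ∫_{-k}^{u} |z|^(q-1) (z + k) dz. Then there is a constant c = c(q) > 0 such that g̃(u,k) ≥ (1/c) (ξω)^(q-1) (u + k)^2. -/

import Mathlib

open Real MeasureTheory intervalIntegral

lemma aux_abs_rpow_intInt {r : ℝ} (hr : -1 < r) (a b : ℝ) :
    IntervalIntegrable (fun z : ℝ => |z| ^ r) volume a b := by
  suffices h : ∀ c : ℝ, IntervalIntegrable (fun z : ℝ => |z| ^ r) volume 0 c from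
    (h a).symm.trans (h b)
  have hpos : ∀ c : ℝ, 0 ≤ c → IntervalIntegrable (fun z : ℝ => |z| ^ r) volume 0 c := by
    intro c hc
    have h0 := intervalIntegrable_rpow' (a := 0) (b := c) hr
    rw [intervalIntegrable_iff, Set.uIoc_of_le hc] at h0 ⊢
    exact h0.congr_fun (fun x hx => by rw [abs_of_pos hx.1]) measurableSet_Ioc
  intro c
  rcases le_total 0 c with hc | hc
  · exact hpos c hc
  · rw [IntervalIntegrable.iff_comp_neg]
    simp only [abs_neg, neg_zero]
    exact hpos (-c) (by linarith)

theorem stmt_8 (q : ℝ) (hq : 0 < q) :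
    ∃ c : ℝ, 0 < c ∧ ∀ ξ ω k u : ℝ, 0 < ξ → 0 < ω →
      (1 / 2) * ξ * ω ≤ k → k ≤ u → u ≤ 12 * ξ * ω →
      (1 / c) * (ξ * ω) ^ (q - 1) * (u + k) ^ 2 ≤
        q * ∫ z in (-k)..u, |z| ^ (q - 1) * (z + k) := by
  have hq1 : (0:ℝ) < q + 1 := by linarith
  set A : ℝ := (2:ℝ) ^ (q - 1) + (12:ℝ) ^ (1 - q) with hA
  have hA0 : 0 < A := by positivity
  refine ⟨4 * A * (q + 1) / q, by positivity, ?_⟩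
  intro ξ ω k u hξ hω hk hku hu
  have hk0 : 0 < k := lt_of_lt_of_le (by positivity) hk
  have hu0 : 0 < u := hk0.trans_le hku
  have hξω : 0 < ξ * ω := by positivity
  set f : ℝ → ℝ := fun z => |z| ^ (q - 1) * (z + k) with hf
  have hint : ∀ a b : ℝ, IntervalIntegrable f volume a b := fun a b =>
    (aux_abs_rpow_intInt (by linarith) a b).mul_continuousOn (by fun_prop)
  -- step 1 : ∫_{-k}^u f ≥ ∫_0^u f
  have h1 : ∫ z in (0:ℝ)..u, f z ≤ ∫ z in (-k)..u, f z := by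
    rw [← intervalIntegral.integral_add_adjacent_intervals (hint (-k) 0) (hint 0 u)]
    have hnn : 0 ≤ ∫ z in (-k)..(0:ℝ), f z := by
      apply intervalIntegral.integral_nonneg (by linarith)
      intro x hx
      have hxk : 0 ≤ x + k := by linarith [hx.1]
      have : (0:ℝ) ≤ |x| ^ (q - 1) := Real.rpow_nonneg (abs_nonneg x) _
      simp only [hf]
      positivity
    linarith
  -- step 2 : ∫_0^u z^q ≤ ∫_0^u f
  have h2 : ∫ z in (0:ℝ)..u, z ^ q ≤ ∫ z in (0:ℝ)..u, f z := by
    apply intervalIntegral.integral_mono_on hu0.le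
      (intervalIntegrable_rpow' (by linarith)) (hint 0 u)
    intro x hx
    obtain ⟨hx0, _⟩ := hx
    simp only [hf, abs_of_nonneg hx0]
    rcases eq_or_lt_of_le hx0 with h0 | h0
    · rw [← h0, Real.zero_rpow (by linarith : q ≠ 0)]
      positivity
    · have hxq : x ^ q = x ^ (q - 1) * x := by
        rw [← Real.rpow_add_one h0.ne' (q - 1)]; ring_nf
      rw [hxq]
      have : (0:ℝ) ≤ x ^ (q - 1) := Real.rpow_nonneg hx0 _
      nlinarith [hk0]
  -- step 3 : compute ∫_0^u z^q
  have h3 : ∫ z in (0:ℝ)..u, z ^ q = u ^ (q + 1) / (q + 1) := by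
    rw [integral_rpow (Or.inl (by linarith)), Real.zero_rpow hq1.ne']
    ring
  have hmain : u ^ (q + 1) / (q + 1) ≤ ∫ z in (-k)..u, f z := by
    rw [← h3]; linarith
  -- arithmetic side
  have hAu : (ξ * ω) ^ (q - 1) ≤ A * u ^ (q - 1) := by
    rcases le_total 1 q with hq' | hq'
    · have h2u : ξ * ω ≤ 2 * u := by nlinarith
      have : (ξ * ω) ^ (q - 1) ≤ (2 * u) ^ (q - 1) :=
        Real.rpow_le_rpow hξω.le h2u (by linarith)
      have h2u' : (2 * u) ^ (q - 1) = (2:ℝ) ^ (q - 1) * u ^ (q - 1) :=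
        Real.mul_rpow (by norm_num) hu0.le
      have h12 : (0:ℝ) ≤ (12:ℝ) ^ (1 - q) * u ^ (q - 1) := by positivity
      rw [hA]
      nlinarith [Real.rpow_nonneg hu0.le (q - 1)]
    · have hu12 : u / 12 ≤ ξ * ω := by nlinarith
      have h12u : 0 < u / 12 := by positivity
      have hstep : (ξ * ω) ^ (q - 1) ≤ (u / 12) ^ (q - 1) :=
        Real.rpow_le_rpow_of_nonpos h12u hu12 (by linarith)
      have hdiv : (u / 12) ^ (q - 1) = u ^ (q - 1) / (12:ℝ) ^ (q - 1) :=
        Real.div_rpow hu0.le (by norm_num : (0:ℝ) ≤ 12) (q - 1)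
      have hneg : (12:ℝ) ^ (1 - q) = ((12:ℝ) ^ (q - 1))⁻¹ := by
        rw [← Real.rpow_neg (by norm_num)]; ring_nf
      have h12pos : (0:ℝ) < (12:ℝ) ^ (q - 1) := Real.rpow_pos_of_pos (by norm_num) _
      have h2q : (0:ℝ) ≤ (2:ℝ) ^ (q - 1) * u ^ (q - 1) := by positivity
      rw [hA]
      have : (u / 12) ^ (q - 1) = (12:ℝ) ^ (1 - q) * u ^ (q - 1) := by
        rw [hdiv, hneg]; ring
      nlinarith [Real.rpow_nonneg hu0.le (q - 1)]
  have huk2 : (u + k) ^ 2 ≤ 4 * u ^ 2 := by nlinarith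
  have huq : u ^ (q + 1) = u ^ (q - 1) * u ^ 2 := by
    rw [← Real.rpow_natCast u 2, ← Real.rpow_add hu0]
    norm_num
    congr 1
    ring
  have hc : (0:ℝ) < 4 * A * (q + 1) / q := by positivity
  have hup : (0:ℝ) ≤ u ^ (q - 1) := Real.rpow_nonneg hu0.le _
  have key : (1 / (4 * A * (q + 1) / q)) * (ξ * ω) ^ (q - 1) * (u + k) ^ 2 ≤
      q / (q + 1) * u ^ (q + 1) := by
    have h4 : (ξ * ω) ^ (q - 1) * (u + k) ^ 2 ≤ (A * u ^ (q - 1)) * (4 * u ^ 2) := by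
      apply mul_le_mul hAu huk2 (by positivity) (by positivity)
    have heq : q / (q + 1) * u ^ (q + 1) =
        (1 / (4 * A * (q + 1) / q)) * ((A * u ^ (q - 1)) * (4 * u ^ 2)) := by
      rw [huq]; field_simp
    rw [heq, mul_assoc]
    have hcinv : (0:ℝ) ≤ 1 / (4 * A * (q + 1) / q) := by positivity
    exact mul_le_mul_of_nonneg_left h4 hcinv
  calc (1 / (4 * A * (q + 1) / q)) * (ξ * ω) ^ (q - 1) * (u + k) ^ 2
      ≤ q / (q + 1) * u ^ (q + 1) := key
    _ = q * (u ^ (q + 1) / (q + 1)) := by ring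
    _ ≤ q * ∫ z in (-k)..u, f z := mul_le_mul_of_nonneg_left hmain hq.le
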